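/- The projection p: sim(Γ_{n+1}) → sim(Γₙ) is 1-Lipschitz with respect to the Kantorovich distances k_{ρ_{n+1}} and k_{ρₙ}, where ρ_{n+1} is the intrinsic semimetric defined via ρ_{n+1}(u,v) = k_{ρₙ}(ν_u,ν_v): for all μ,ν ∈ sim(Γ_{n+1}), k_{ρₙ}(p(μ),p(ν)) ≤ k_{ρ_{n+1}}(μ,ν). -/

import Mathlib

open Finset

/-- A probability distribution on a finite set, given by its weights. -/
def IsProb {X : Type*} [Fintype X] (μ : X → ℝ) : Prop :=
  (∀ x, 0 ≤ μ x) ∧ ∑ x, μ x = 1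

/-- A coupling of `μ` and `ν`: nonnegative weights whose first marginal is `μ`
and second marginal is `ν`. -/
def IsCoupling {X : Type*} [Fintype X] (μ ν : X → ℝ) (c : X → X → ℝ) : Prop :=
  (∀ x y, 0 ≤ c x y) ∧ (∀ x, ∑ y, c x y = μ x) ∧ (∀ y, ∑ x, c x y = ν y)

/-- The Kantorovich (transportation) distance between two probability
distributions on a finite (semi)metric space `(X, d)`. -/
noncomputable def kant {X : Type*} [Fintype X] (d : X → X → ℝ) (μ ν : X → ℝ) : ℝ :=
  sInf { r | ∃ c, IsCoupling μ ν c ∧ r = ∑ x, ∑ y, d x y * c x y }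

/-- The Dirac (point mass) distribution at a point. -/
def dirac {X : Type*} [DecidableEq X] (x : X) : X → ℝ := fun y => if y = x then 1 else 0
/-- An `ℕ`-graded graph (Bratteli diagram): one vertex at level `0`, finitely
many vertices at each level, edges only between adjacent levels, every vertex of
positive level has a predecessor and every vertex has a follower. -/
structure GradedGraph where
  V : ℕ → Type
  fin : ∀ n, Fintype (V n)
  rootNonempty : Nonempty (V 0)
  rootSubsingleton : Subsingleton (V 0)
  adj : ∀ n, V n → V (n + 1) → Prop
  hasPred : ∀ n (v : V (n + 1)), ∃ w, adj n w v
  hasSucc : ∀ n (v : V n), ∃ u, adj n v u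

instance (G : GradedGraph) (n : ℕ) : Fintype (G.V n) := G.fin n

/-- The type of paths from the root to a vertex `v` of level `n`. -/
def GradedGraph.PathTo (G : GradedGraph) : ∀ n, G.V n → Type
  | 0, _ => PUnit
  | n + 1, v => Σ w : G.V n, PLift (G.adj n w v) × G.PathTo n w

/-- The dimension of a vertex: the number of paths from the root to it. -/
noncomputable def GradedGraph.dim (G : GradedGraph) (n : ℕ) (v : G.V n) : ℕ :=
  Nat.card (G.PathTo n v)

open Classical in
/-- The probability measure on the predecessors of a vertex `v ∈ Γ_{n+1}`
induced by `v`: `ν_v(w) = dim w / dim v` for `w ≺ v`. -/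
noncomputable def GradedGraph.nu (G : GradedGraph) (n : ℕ) (v : G.V (n + 1)) :
    G.V n → ℝ :=
  fun w => if G.adj n w v then (G.dim n w : ℝ) / (G.dim (n + 1) v : ℝ) else 0

/-- The projection `p : sim(Γ_{n+1}) → sim(Γ_n)`, the affine extension of
`v ↦ Σ_{w ≺ v} ν_v(w) δ_w`. -/
noncomputable def GradedGraph.proj (G : GradedGraph) (n : ℕ)
    (a : G.V (n + 1) → ℝ) : G.V n → ℝ :=
  fun w => ∑ v, a v * G.nu n v w

/-! Take a coupling `c` of `μ, ν` and, for all `u, v`, a coupling `g u v` of `ν_u, ν_v` whose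
cost is within `ε` of `k_ρ(ν_u, ν_v)`. The glued plan `∑ u v, c u v • g u v` couples `p μ` with
`p ν`, and its cost is `∑ u v, c u v · cost(g u v) ≤ ∑ u v, c u v · ρ_{n+1}(u, v) + ε`. -/

section Kantorovich

variable {X Y : Type*} [Fintype X] [Fintype Y]

def transportCost (d c : X → X → ℝ) : ℝ :=
  ∑ x, ∑ y, d x y * c x y

def mixture (p : Y → X → ℝ) (μ : Y → ℝ) : X → ℝ :=
  fun x => ∑ u, μ u * p u x

theorem IsProb.isCoupling_mul {μ ν : X → ℝ} (hμ : IsProb μ) (hν : IsProb ν) :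
    IsCoupling μ ν (fun x y => μ x * ν y) :=
  ⟨fun x y => mul_nonneg (hμ.1 x) (hν.1 y),
    fun x => by rw [← mul_sum, hν.2, mul_one],
    fun y => by rw [← sum_mul, hμ.2, one_mul]⟩

theorem IsCoupling.sum_sum_eq_one {μ ν : X → ℝ} {c : X → X → ℝ} (hc : IsCoupling μ ν c)
    (hμ : IsProb μ) : ∑ x, ∑ y, c x y = 1 := by
  simp only [hc.2.1, hμ.2]

theorem transportCost_nonneg {d c : X → X → ℝ} (hd : ∀ x y, 0 ≤ d x y)
    (hc : ∀ x y, 0 ≤ c x y) : 0 ≤ transportCost d c :=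
  sum_nonneg fun x _ => sum_nonneg fun y _ => mul_nonneg (hd x y) (hc x y)

theorem kant_le_transportCost {d : X → X → ℝ} (hd : ∀ x y, 0 ≤ d x y) {μ ν : X → ℝ}
    {c : X → X → ℝ} (hc : IsCoupling μ ν c) : kant d μ ν ≤ transportCost d c :=
  csInf_le (s := {r | ∃ c, IsCoupling μ ν c ∧ r = transportCost d c})
    ⟨0, fun _ ⟨_, hc', hr⟩ => hr ▸ transportCost_nonneg hd hc'.1⟩ ⟨c, hc, rfl⟩

theorem le_kant_of_forall_isCoupling {d : X → X → ℝ} {μ ν : X → ℝ} (hμ : IsProb μ)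
    (hν : IsProb ν) {r : ℝ} (h : ∀ c, IsCoupling μ ν c → r ≤ transportCost d c) :
    r ≤ kant d μ ν :=
  le_csInf (s := {r | ∃ c, IsCoupling μ ν c ∧ r = transportCost d c})
    ⟨_, _, hμ.isCoupling_mul hν, rfl⟩ fun _ ⟨c, hc, hr⟩ => hr ▸ h c hc

theorem exists_isCoupling_transportCost_lt (d : X → X → ℝ) {μ ν : X → ℝ} (hμ : IsProb μ)
    (hν : IsProb ν) {ε : ℝ} (hε : 0 < ε) :
    ∃ c, IsCoupling μ ν c ∧ transportCost d c < kant d μ ν + ε := by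
  obtain ⟨_, ⟨c, hc, rfl⟩, hlt⟩ :=
    Real.lt_sInf_add_pos (s := {r | ∃ c, IsCoupling μ ν c ∧ r = transportCost d c})
      ⟨_, _, hμ.isCoupling_mul hν, rfl⟩ hε
  exact ⟨c, hc, hlt⟩

theorem IsCoupling.glue {p : Y → X → ℝ} {μ ν : Y → ℝ} {c : Y → Y → ℝ}
    {g : Y → Y → X → X → ℝ} (hc : IsCoupling μ ν c)
    (hg : ∀ u v, IsCoupling (p u) (p v) (g u v)) :
    IsCoupling (mixture p μ) (mixture p ν) (fun x y => ∑ u, ∑ v, c u v * g u v x y) := by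
  refine ⟨fun x y => sum_nonneg fun u _ => sum_nonneg fun v _ =>
    mul_nonneg (hc.1 u v) ((hg u v).1 x y), fun x => ?_, fun y => ?_⟩
  · rw [sum_comm, mixture]
    refine sum_congr rfl fun u _ => ?_
    rw [sum_comm]
    simp only [← mul_sum, (hg _ _).2.1, ← sum_mul, hc.2.1]
  · rw [sum_comm_cycle, mixture]
    refine sum_congr rfl fun v _ => ?_
    rw [sum_comm]
    simp only [← mul_sum, (hg _ _).2.2, ← sum_mul, hc.2.2]

theorem transportCost_mixture (d : X → X → ℝ) (c : Y → Y → ℝ) (g : Y → Y → X → X → ℝ) :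
    transportCost d (fun x y => ∑ u, ∑ v, c u v * g u v x y) =
      ∑ u, ∑ v, c u v * transportCost d (g u v) := by
  simp only [transportCost, mul_sum]
  conv_lhs => rw [sum_comm_cycle]
  refine sum_congr rfl fun u _ => ?_
  conv_lhs => rw [sum_comm_cycle]
  exact sum_congr rfl fun _ _ => sum_congr rfl fun _ _ => sum_congr rfl fun _ _ => by ring

theorem kant_mixture_le {d : X → X → ℝ} (hd : ∀ x y, 0 ≤ d x y) {p : Y → X → ℝ}
    (hp : ∀ u, IsProb (p u)) {μ ν : Y → ℝ} (hμ : IsProb μ) (hν : IsProb ν) :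
    kant d (mixture p μ) (mixture p ν) ≤ kant (fun u v => kant d (p u) (p v)) μ ν := by
  refine le_kant_of_forall_isCoupling hμ hν fun c hc => le_of_forall_pos_le_add fun ε hε => ?_
  choose g hg hcost using fun u v => exists_isCoupling_transportCost_lt d (hp u) (hp v) hε
  calc kant d (mixture p μ) (mixture p ν)
      ≤ transportCost d (fun x y => ∑ u, ∑ v, c u v * g u v x y) :=
        kant_le_transportCost hd (hc.glue hg)
    _ = ∑ u, ∑ v, c u v * transportCost d (g u v) := transportCost_mixture d c g
    _ ≤ ∑ u, ∑ v, c u v * (kant d (p u) (p v) + ε) := by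
        gcongr with u _ v _
        exacts [hc.1 u v, (hcost u v).le]
    _ = transportCost (fun u v => kant d (p u) (p v)) c + ε * ∑ u, ∑ v, c u v := by
        simp only [transportCost, mul_sum, ← sum_add_distrib]
        exact sum_congr rfl fun _ _ => sum_congr rfl fun _ _ => by ring
    _ = transportCost (fun u v => kant d (p u) (p v)) c + ε := by
        rw [hc.sum_sum_eq_one hμ, mul_one]

end Kantorovich

namespace GradedGraph

variable (G : GradedGraph)

theorem finite_pathTo : ∀ n (v : G.V n), Finite (G.PathTo n v)
  | 0, _ => inferInstanceAs (Finite PUnit)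
  | n + 1, _ =>
    have := finite_pathTo n
    inferInstanceAs (Finite (Σ _, _))

theorem nonempty_pathTo : ∀ n (v : G.V n), Nonempty (G.PathTo n v)
  | 0, _ => ⟨PUnit.unit⟩
  | n + 1, v =>
    have ⟨w, hw⟩ := G.hasPred n v
    have ⟨q⟩ := nonempty_pathTo n w
    ⟨⟨w, ⟨hw⟩, q⟩⟩

theorem dim_pos (n : ℕ) (v : G.V n) : 0 < G.dim n v :=
  have := G.finite_pathTo n v
  have := G.nonempty_pathTo n v
  Nat.card_pos

open Classical in
theorem dim_succ (n : ℕ) (v : G.V (n + 1)) :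
    G.dim (n + 1) v = ∑ w, if G.adj n w v then G.dim n w else 0 := by
  have := G.finite_pathTo n
  rw [dim, PathTo, Nat.card_sigma]
  refine sum_congr rfl fun w _ => ?_
  split_ifs with h <;> simp [h, dim]

theorem isProb_nu (n : ℕ) (v : G.V (n + 1)) : IsProb (G.nu n v) := by
  have hv : (0 : ℝ) < G.dim (n + 1) v := mod_cast G.dim_pos (n + 1) v
  refine ⟨fun w => ?_, ?_⟩
  · unfold nu
    split_ifs <;> positivity
  · have h := congrArg (fun k : ℕ => (k : ℝ) / G.dim (n + 1) v) (G.dim_succ n v)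
    simp only [div_self hv.ne', Nat.cast_sum, Nat.cast_ite, Nat.cast_zero, sum_div, ite_div,
      zero_div] at h
    exact h.symm

end GradedGraph

theorem proj_lipschitz_general (G : GradedGraph) (n : ℕ)
    (d : G.V n → G.V n → ℝ)
    (hd_nonneg : ∀ x y, 0 ≤ d x y)
    (μ ν : G.V (n + 1) → ℝ) (hμ : IsProb μ) (hν : IsProb ν) :
    kant d (G.proj n μ) (G.proj n ν) ≤
      kant (fun u v => kant d (G.nu n u) (G.nu n v)) μ ν :=
  kant_mixture_le hd_nonneg (G.isProb_nu n) hμ hν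

/-- the projection `p : sim(Γ_{n+1}) → sim(Γ_n)` is 1-Lipschitz
from the Kantorovich distance over the intrinsic semimetric
`ρ_{n+1}(u,v) = k_{ρ_n}(ν_u, ν_v)` to the Kantorovich distance over `ρ_n`. -/
theorem proj_lipschitz (G : GradedGraph) (n : ℕ)
    (d : G.V n → G.V n → ℝ)
    (hd_nonneg : ∀ x y, 0 ≤ d x y) (hd_self : ∀ x, d x x = 0)
    (hd_symm : ∀ x y, d x y = d y x)
    (hd_tri : ∀ x y z, d x z ≤ d x y + d y z)
    (μ ν : G.V (n + 1) → ℝ) (hμ : IsProb μ) (hν : IsProb ν) :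
    kant d (G.proj n μ) (G.proj n ν) ≤
      kant (fun u v => kant d (G.nu n u) (G.nu n v)) μ ν :=
  proj_lipschitz_general G n d hd_nonneg μ ν hμ hν
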